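/- For all nonnegative integers m and n, 2 I_n^m - m^n = I_n^{m+1}, where I_n^m = \sum_{s=0}^{n} \binom{n}{s} m^s J_{n-s} and J_r is the Fubini number. (Equivalently, I_n^{m+1} + m^n = 2 I_n^m.) -/

import Mathlib

/-!
`I_n^m` is the binomial convolution of `s ↦ m ^ s` with the Fubini numbers. Since `(m + 1) ^ s`
is itself the binomial convolution of `m ^ s` and `1 ^ s`, associativity of the convolution gives
`I_n^(m+1) = ∑ₖ C(n,k) mᵏ I_(n-k)^1`, while `mⁿ = ∑ₖ C(n,k) mᵏ 0^(n-k)`. This reduces the identity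
to the case `m = 0`, namely `I_r^1 + 0^r = 2 J_r`, which is the Fubini recurrence
`J_r = ∑_{k<r} C(r,k) J_k` for `r ≥ 1`. The recurrence comes from splitting a surjection onto
`{0, …, t}` into the preimage of `t` and a surjection of the remaining points onto `{0, …, t-1}`.
-/

open Finset

/-- Stirling numbers of the second kind. -/
def stirling2 : ℕ → ℕ → ℕ
  | 0, 0 => 1
  | 0, _ + 1 => 0
  | _ + 1, 0 => 0
  | n + 1, k + 1 => (k + 1) * stirling2 n (k + 1) + stirling2 n k

/-- Fubini numbers: number of preferential arrangements of an n-set. -/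
def fubini (n : ℕ) : ℕ := ∑ s ∈ range (n + 1), stirling2 n s * s.factorial

/-- Number of barred preferential arrangements of an n-set with m bars. -/
def barred (n m : ℕ) : ℕ :=
  ∑ s ∈ range (n + 1), stirling2 n s * s.factorial * (m + s).choose m

/-- Number of restricted barred preferential arrangements. -/
def restrictedBarred (n m : ℕ) : ℕ :=
  ∑ s ∈ range (n + 1), n.choose s * m ^ s * fubini (n - s)

theorem sum_range_choose_mul_sub {R : Type*} [Semiring R] (f : ℕ → R) (n : ℕ) :
    ∑ s ∈ range (n + 1), (n.choose s : R) * f (n - s) =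
      ∑ s ∈ range (n + 1), (n.choose s : R) * f s := by
  rw [← sum_range_reflect]
  refine sum_congr rfl fun s hs => ?_
  have hs : s ≤ n := mem_range_succ_iff.mp hs
  rw [Nat.add_sub_cancel, Nat.choose_symm hs, Nat.sub_sub_self hs]

theorem sum_choose_mul_add_pow_mul {R : Type*} [CommSemiring R] (x y : R) (f : ℕ → R) (n : ℕ) :
    ∑ s ∈ range (n + 1), (n.choose s : R) * (x + y) ^ s * f (n - s) =
      ∑ k ∈ range (n + 1), (n.choose k : R) * x ^ k *
        ∑ i ∈ range (n - k + 1), ((n - k).choose i : R) * y ^ i * f (n - k - i) := by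
  calc _ = ∑ s ∈ range (n + 1), ∑ k ∈ range (s + 1), (n.choose k : R) * x ^ k *
          (((n - k).choose (s - k) : R) * y ^ (s - k) * f (n - k - (s - k))) := by
        refine sum_congr rfl fun s _ => ?_
        rw [add_pow, mul_sum, sum_mul]
        refine sum_congr rfl fun k hk => ?_
        have hks : k ≤ s := mem_range_succ_iff.mp hk
        have hchoose : (n.choose s : R) * s.choose k = n.choose k * (n - k).choose (s - k) := by
          rw [← Nat.cast_mul, ← Nat.cast_mul, Nat.choose_mul hks]
        calc _ = (n.choose s : R) * s.choose k * (x ^ k * y ^ (s - k) * f (n - s)) := by ring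
          _ = _ := by rw [hchoose, Nat.sub_sub_sub_cancel_right hks]; ring
    _ = _ := by
        rw [sum_range_diag_flip (n + 1) fun k i => (n.choose k : R) * x ^ k *
          (((n - k).choose i : R) * y ^ i * f (n - k - i))]
        refine sum_congr rfl fun k hk => ?_
        rw [mul_sum, Nat.sub_add_comm (mem_range_succ_iff.mp hk)]

theorem stirling2_eq_stirlingSecond : stirling2 = Nat.stirlingSecond := by
  funext n k
  induction n generalizing k with
  | zero => cases k <;> rfl
  | succ n ih => cases k <;> simp [stirling2, Nat.stirlingSecond, ih]

def surjCount (n k : ℕ) : ℕ := stirling2 n k * k.factorial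

theorem surjCount_succ_zero (n : ℕ) : surjCount (n + 1) 0 = 0 := rfl

theorem surjCount_succ_succ (n k : ℕ) :
    surjCount (n + 1) (k + 1) = (k + 1) * (surjCount n (k + 1) + surjCount n k) := by
  simp only [surjCount, stirling2, Nat.factorial_succ]
  ring

theorem surjCount_eq_zero_of_lt {n k : ℕ} (h : n < k) : surjCount n k = 0 := by
  simp [surjCount, stirling2_eq_stirlingSecond, Nat.stirlingSecond_eq_zero_of_lt h]

/- Both sides count the maps from an `n`-set to a `(t + 1)`-set whose image contains a fixed
`t`-subset: on the left, `j` is the size of the preimage of that subset. -/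
theorem sum_choose_mul_surjCount (n t : ℕ) :
    ∑ j ∈ range (n + 1), n.choose j * surjCount j t = surjCount n (t + 1) + surjCount n t := by
  induction n generalizing t with
  | zero => simp [surjCount, stirling2]
  | succ n ih =>
    have hpascal := sum_choose_succ_mul (R := ℕ) (fun j _ => surjCount j t) n
    simp only [Nat.cast_id] at hpascal
    rw [hpascal, ih]
    cases t with
    | zero => simp [surjCount_succ_zero, surjCount_succ_succ n 0]
    | succ s =>
      simp only [surjCount_succ_succ, mul_left_comm _ (s + 1), ← mul_sum, sum_add_distrib,
        mul_add, ih]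
      ring

theorem surjCount_succ_succ_eq_sum (n t : ℕ) :
    surjCount (n + 1) (t + 1) = ∑ j ∈ range (n + 1), (n + 1).choose j * surjCount j t := by
  have h := sum_choose_mul_surjCount (n + 1) t
  rw [sum_range_succ, Nat.choose_self, one_mul] at h
  omega

theorem fubini_eq_sum_surjCount {n N : ℕ} (h : n < N) :
    fubini n = ∑ t ∈ range N, surjCount n t := by
  refine sum_subset (range_subset_range.mpr h) fun t _ ht => ?_
  exact surjCount_eq_zero_of_lt (by simpa using ht)

theorem fubini_succ (n : ℕ) :
    fubini (n + 1) = ∑ j ∈ range (n + 1), (n + 1).choose j * fubini j := by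
  calc fubini (n + 1)
      = ∑ t ∈ range (n + 1), surjCount (n + 1) (t + 1) := by
        rw [fubini_eq_sum_surjCount (Nat.lt_succ_self _), sum_range_succ', surjCount_succ_zero,
          add_zero]
    _ = ∑ j ∈ range (n + 1), (n + 1).choose j * ∑ t ∈ range (n + 1), surjCount j t := by
        simp only [surjCount_succ_succ_eq_sum, mul_sum]
        exact sum_comm
    _ = _ := by
        refine sum_congr rfl fun j hj => ?_
        rw [fubini_eq_sum_surjCount (mem_range.mp hj)]

theorem restrictedBarred_one_add_zero_pow (n : ℕ) :
    restrictedBarred n 1 + 0 ^ n = 2 * fubini n := by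
  have hreflect := sum_range_choose_mul_sub fubini n
  simp only [Nat.cast_id] at hreflect
  simp only [restrictedBarred, one_pow, mul_one, hreflect]
  cases n with
  | zero => rfl
  | succ n =>
    rw [sum_range_succ, ← fubini_succ, Nat.choose_self, zero_pow n.succ_ne_zero]
    ring

theorem restricted_recurrence (m n : ℕ) :
    restrictedBarred n (m + 1) + m ^ n = 2 * restrictedBarred n m := by
  have hshift : restrictedBarred n (m + 1) =
      ∑ k ∈ range (n + 1), n.choose k * m ^ k * restrictedBarred (n - k) 1 := by
    simpa [restrictedBarred] using sum_choose_mul_add_pow_mul m 1 fubini n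
  have hpow : m ^ n = ∑ k ∈ range (n + 1), n.choose k * m ^ k * 0 ^ (n - k) := by
    rw [← add_zero m, add_pow]
    exact sum_congr rfl fun k _ => by rw [Nat.cast_id]; ring
  rw [hshift, hpow, ← sum_add_distrib, restrictedBarred, mul_sum]
  refine sum_congr rfl fun k _ => ?_
  rw [← mul_add, restrictedBarred_one_add_zero_pow]
  ring
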